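/- If α is distributed as PH(m=0, a=1, b, c=1) for integer b ≥ 2, then α → 0 in probability as b → ∞: for every ε > 0, P(α > ε) → 0 as b → ∞. -/

import Mathlib

open MeasureTheory Filter

noncomputable def rf (x : ℝ) (n : ℕ) : ℝ := ∏ s ∈ Finset.range n, (x + s)

lemma rf_pos {x : ℝ} (hx : 0 < x) (n : ℕ) : 0 < rf x n :=
  Finset.prod_pos fun s _ => by positivity

lemma rf_mono {x y : ℝ} (hx : 0 < x) (hxy : x ≤ y) (n : ℕ) : rf x n ≤ rf y n :=
  Finset.prod_le_prod (fun s _ => by positivity) (fun s _ => by linarith)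

lemma rf_split {x : ℝ} {b : ℕ} (hb : 2 ≤ b) :
    rf x b = x * (x + 1) * ∏ s ∈ Finset.Ico 2 b, (x + s) := by
  rw [rf, ← Finset.prod_range_mul_prod_Ico _ hb]
  congr 1
  simp [Finset.prod_range_succ]

lemma measurable_rf_inv (b : ℕ) : Measurable fun α : ℝ => 1 / rf (α + 1) b := by
  simp only [one_div]
  have : Continuous fun α : ℝ => rf (α + 1) b := by
    unfold rf
    exact continuous_finset_prod _ fun s _ => by continuity
  exact this.measurable.inv

lemma integrableOn_aux {c : ℝ} (hc : 0 ≤ c) :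
    IntegrableOn (fun α : ℝ => ((α + 1) * (α + 2))⁻¹) (Set.Ioi c) := by
  have h2 : IntegrableOn (fun x : ℝ => x ^ (-2 : ℝ)) (Set.Ioi (c + 1)) :=
    integrableOn_Ioi_rpow_of_lt (by norm_num) (by linarith)
  have e : MeasurePreserving (fun x : ℝ => x + 1) volume volume :=
    measurePreserving_add_right volume 1
  have emb : MeasurableEmbedding (fun x : ℝ => x + 1) :=
    (Homeomorph.addRight (1 : ℝ)).measurableEmbedding
  have h3 : IntegrableOn (fun x : ℝ => (x + 1) ^ (-2 : ℝ)) (Set.Ioi c) := by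
    have := (e.integrableOn_comp_preimage emb (s := Set.Ioi (c + 1))).2 h2
    have hpre : (fun x : ℝ => x + 1) ⁻¹' Set.Ioi (c + 1) = Set.Ioi c := by
      ext x; simp [Set.mem_Ioi]
    rwa [hpre] at this
  refine h3.mono' ?_ ?_
  · have : Measurable fun x : ℝ => ((x + 1) * (x + 2))⁻¹ := by
      apply Measurable.inv; fun_prop
    exact this.aestronglyMeasurable
  · refine (ae_restrict_iff' measurableSet_Ioi).2 (Filter.Eventually.of_forall fun x hx => ?_)
    have hx0 : 0 < x := lt_of_le_of_lt hc hx
    have h1 : (0:ℝ) < (x + 1) * (x + 2) := by nlinarith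
    rw [Real.norm_eq_abs, abs_of_pos (inv_pos.2 h1),
      Real.rpow_neg (by linarith), Real.rpow_two]
    exact inv_anti₀ (by nlinarith) (by nlinarith)


lemma fac_bound (ε δ c0 : ℝ) (hε : 0 < ε) (hδ : 0 < δ) (hεδ : ε = δ + δ)
    (hc0def : c0 = δ / (1 + ε)) (s : ℕ) :
    (1 + δ + (s:ℝ)) / (ε + 1 + (s:ℝ)) ≤ Real.exp (-(c0 * ((s:ℝ) + 1)⁻¹)) := by
  have hs0 : (0:ℝ) ≤ (s:ℝ) := Nat.cast_nonneg s
  have hden : (0:ℝ) < ε + 1 + (s:ℝ) := by linarith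
  have key : c0 * ((s:ℝ) + 1)⁻¹ ≤ δ / (ε + 1 + (s:ℝ)) := by
    have heq : c0 * ((s:ℝ) + 1)⁻¹ = δ / ((1 + ε) * ((s:ℝ) + 1)) := by
      rw [hc0def]; field_simp
    rw [heq]
    apply div_le_div_of_nonneg_left hδ.le hden
    nlinarith
  have h3 : c0 * ((s:ℝ) + 1)⁻¹ * (ε + 1 + (s:ℝ)) ≤ δ := by
    have := mul_le_mul_of_nonneg_right key hden.le
    rwa [div_mul_cancel₀ _ hden.ne'] at this
  calc (1 + δ + (s:ℝ)) / (ε + 1 + (s:ℝ))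
      ≤ 1 - c0 * ((s:ℝ) + 1)⁻¹ := by
        rw [div_le_iff₀ hden]
        nlinarith
    _ ≤ Real.exp (-(c0 * ((s:ℝ) + 1)⁻¹)) := by
        linarith [Real.add_one_le_exp (-(c0 * ((s:ℝ) + 1)⁻¹))]

/-- If `α` has the `PH(m=0, a=1, b, c=1)` distribution, with density
proportional to `1/[α+1]^b` on `(0,∞)`, then `α → 0` in probability as
`b → ∞`: for every `ε > 0`, `P(α > ε) → 0`. -/
theorem half_horseshoe_convergence_in_probability (ε : ℝ) (hε : 0 < ε) :
    Tendsto (fun b : ℕ =>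
        (∫ α in Set.Ioi ε, 1 / rf (α + 1) b) /
          (∫ α in Set.Ioi (0 : ℝ), 1 / rf (α + 1) b))
      atTop (nhds 0) := by
  set δ : ℝ := ε / 2 with hδdef
  have hδ : 0 < δ := by positivity
  have hεδ : ε = δ + δ := by rw [hδdef]; ring
  set c0 : ℝ := δ / (1 + ε) with hc0def
  have hc0 : 0 < c0 := by positivity
  set C : ℝ := ∫ α in Set.Ioi ε, ((α + 1) * (α + 2))⁻¹ with hCdef
  have hC : 0 ≤ C := by
    refine setIntegral_nonneg measurableSet_Ioi fun x hx => ?_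
    have : 0 < x := hε.trans hx
    positivity
  set K : ℝ := C / δ * ((1 + δ) * (1 + δ + 1)) with hKdef
  have hK : 0 ≤ K := by
    apply mul_nonneg (div_nonneg hC hδ.le)
    nlinarith
  set T : ℕ → ℝ := fun b => ∑ s ∈ Finset.Ico 2 b, ((s : ℝ) + 1)⁻¹ with hTdef
  clear_value δ c0 C K T
  -- the dominating sequence tends to 0
  have hTtop : Tendsto T atTop atTop := by
    have hH := Real.tendsto_sum_range_one_div_nat_succ_atTop
    simp only [one_div] at hH
    have hH' : Tendsto
        (fun b : ℕ => (∑ i ∈ Finset.range b, ((i : ℝ) + 1)⁻¹) + (-(3/2))) atTop atTop :=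
      tendsto_atTop_add_const_right _ _ hH
    refine hH'.congr' ?_
    filter_upwards [eventually_ge_atTop 2] with b hb
    have hsum := Finset.sum_range_add_sum_Ico (fun i : ℕ => ((i : ℝ) + 1)⁻¹) hb
    have h2 : (∑ i ∈ Finset.range 2, ((i : ℝ) + 1)⁻¹) = 3/2 := by
      rw [Finset.sum_range_succ, Finset.sum_range_one]
      norm_num
    have hTb : T b = ∑ s ∈ Finset.Ico 2 b, ((s : ℝ) + 1)⁻¹ := by rw [hTdef]
    linarith
  have hg0 : Tendsto (fun b => K * Real.exp (-c0 * T b)) atTop (nhds 0) := by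
    have h1 : Tendsto (fun b => c0 * T b) atTop atTop := hTtop.const_mul_atTop hc0
    have h2 : Tendsto (fun b => -c0 * T b) atTop atBot := by
      have := tendsto_neg_atTop_atBot.comp h1
      exact this.congr fun b => (neg_mul c0 (T b)).symm
    have h3 := Real.tendsto_exp_atBot.comp h2
    have h4 : Tendsto (fun b => K * Real.exp (-c0 * T b)) atTop (nhds (K * 0)) :=
      (h3.const_mul K)
    simpa using h4
  apply squeeze_zero' ?_ ?_ hg0
  · filter_upwards with b
    apply div_nonneg
    · refine setIntegral_nonneg measurableSet_Ioi fun x hx => ?_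
      have hx0 : 0 < x := hε.trans hx
      have := rf_pos (show (0:ℝ) < x + 1 by linarith) b
      positivity
    · refine setIntegral_nonneg measurableSet_Ioi fun x hx => ?_
      have hx0 : 0 < x := hx
      have := rf_pos (show (0:ℝ) < x + 1 by linarith) b
      positivity
  · filter_upwards [eventually_ge_atTop 2] with b hb
    set Q : ℝ := ∏ s ∈ Finset.Ico 2 b, (ε + 1 + (s : ℝ)) with hQdef
    have hQpos : 0 < Q := Finset.prod_pos fun s _ => by positivity
    set P : ℝ := ∏ s ∈ Finset.Ico 2 b, (1 + δ + (s : ℝ)) with hPdef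
    have hPpos : 0 < P := Finset.prod_pos fun s _ => by positivity
    clear_value Q P
    have hrfpos : 0 < rf (1 + δ) b := rf_pos (by linarith) b
    -- integrability on Ioi 0
    have hfineq : ∀ x : ℝ, 0 < x → (x + 1) * (x + 2) ≤ rf (x + 1) b := by
      intro x hx
      rw [rf_split hb]
      have h1 : (1 : ℝ) ≤ ∏ s ∈ Finset.Ico 2 b, (x + 1 + (s : ℝ)) := by
        have := Finset.prod_le_prod (f := fun _ : ℕ => (1:ℝ))
          (g := fun s : ℕ => x + 1 + (s : ℝ)) (s := Finset.Ico 2 b)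
          (fun s _ => zero_le_one) (fun s hs => by
            show (1:ℝ) ≤ x + 1 + (s : ℝ)
            have : (2 : ℝ) ≤ (s : ℝ) := by exact_mod_cast (Finset.mem_Ico.1 hs).1
            linarith)
        simpa using this
      have hpos : (0:ℝ) ≤ (x + 1) * (x + 1 + 1) := by nlinarith
      calc (x + 1) * (x + 2) = (x + 1) * (x + 1 + 1) * 1 := by ring
        _ ≤ (x + 1) * (x + 1 + 1) * ∏ s ∈ Finset.Ico 2 b, (x + 1 + (s : ℝ)) :=
            mul_le_mul_of_nonneg_left h1 hpos
    have hInt0 : IntegrableOn (fun α : ℝ => 1 / rf (α + 1) b) (Set.Ioi 0) := by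
      refine (integrableOn_aux le_rfl).mono' (measurable_rf_inv b).aestronglyMeasurable ?_
      refine (ae_restrict_iff' measurableSet_Ioi).2 (Filter.Eventually.of_forall fun x hx => ?_)
      have hx0 : (0:ℝ) < x := hx
      have hrf : 0 < rf (x + 1) b := rf_pos (by linarith) b
      rw [Real.norm_eq_abs, one_div, abs_of_pos (inv_pos.2 hrf)]
      exact inv_anti₀ (by nlinarith) (hfineq x hx0)
    -- numerator bound
    have hNum : (∫ α in Set.Ioi ε, 1 / rf (α + 1) b) ≤ C * Q⁻¹ := by
      have hgint : Integrable (fun α : ℝ => ((α + 1) * (α + 2))⁻¹ * Q⁻¹)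
          (volume.restrict (Set.Ioi ε)) := (integrableOn_aux hε.le).mul_const _
      have hle : (fun α : ℝ => 1 / rf (α + 1) b) ≤ᵐ[volume.restrict (Set.Ioi ε)]
          fun α : ℝ => ((α + 1) * (α + 2))⁻¹ * Q⁻¹ := by
        refine (ae_restrict_iff' measurableSet_Ioi).2 (Filter.Eventually.of_forall fun x hx => ?_)
        show 1 / rf (x + 1) b ≤ ((x + 1) * (x + 2))⁻¹ * Q⁻¹
        have hxε : ε < x := hx
        have hx0 : 0 < x := hε.trans hxε
        have hP' : Q ≤ ∏ s ∈ Finset.Ico 2 b, (x + 1 + (s : ℝ)) := by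
          rw [hQdef]
          exact Finset.prod_le_prod (fun s _ => by positivity) (fun s _ => by linarith)
        have hx12 : (0:ℝ) < (x + 1) * (x + 2) := by nlinarith
        have hrfge : (x + 1) * (x + 2) * Q ≤ rf (x + 1) b := by
          rw [rf_split hb]
          have hxx : (x + 1) + 1 = x + 2 := by ring
          rw [hxx]
          exact mul_le_mul_of_nonneg_left hP' hx12.le
        rw [one_div]
        calc (rf (x + 1) b)⁻¹ ≤ ((x + 1) * (x + 2) * Q)⁻¹ :=
              inv_anti₀ (mul_pos hx12 hQpos) hrfge
          _ = ((x + 1) * (x + 2))⁻¹ * Q⁻¹ := mul_inv _ _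
      have hf0 : (0:ℝ → ℝ) ≤ᵐ[volume.restrict (Set.Ioi ε)]
          fun α : ℝ => 1 / rf (α + 1) b := by
        refine (ae_restrict_iff' measurableSet_Ioi).2 (Filter.Eventually.of_forall fun x hx => ?_)
        have hx0 : 0 < x := hε.trans hx
        have := rf_pos (show (0:ℝ) < x + 1 by linarith) b
        positivity
      have := integral_mono_of_nonneg hf0 hgint hle
      calc (∫ α in Set.Ioi ε, 1 / rf (α + 1) b)
          ≤ ∫ α in Set.Ioi ε, ((α + 1) * (α + 2))⁻¹ * Q⁻¹ := this
        _ = C * Q⁻¹ := by rw [integral_mul_const, hCdef]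
    -- denominator bound
    have hDen : δ * (rf (1 + δ) b)⁻¹ ≤ ∫ α in Set.Ioi (0:ℝ), 1 / rf (α + 1) b := by
      have hstep1 : (∫ α in Set.Ioc (0:ℝ) δ, 1 / rf (α + 1) b)
          ≤ ∫ α in Set.Ioi (0:ℝ), 1 / rf (α + 1) b := by
        refine setIntegral_mono_set hInt0 ?_
          (HasSubset.Subset.eventuallyLE Set.Ioc_subset_Ioi_self)
        refine (ae_restrict_iff' measurableSet_Ioi).2 (Filter.Eventually.of_forall fun x hx => ?_)
        have hx0 : (0:ℝ) < x := hx
        have := rf_pos (show (0:ℝ) < x + 1 by linarith) b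
        positivity
      have hconst : (∫ _ in Set.Ioc (0:ℝ) δ, (rf (1 + δ) b)⁻¹) = δ * (rf (1 + δ) b)⁻¹ := by
        rw [setIntegral_const, measureReal_def, Real.volume_Ioc, smul_eq_mul]
        norm_num [ENNReal.toReal_ofReal hδ.le]
      have hstep2 : δ * (rf (1 + δ) b)⁻¹ ≤ ∫ α in Set.Ioc (0:ℝ) δ, 1 / rf (α + 1) b := by
        rw [← hconst]
        refine setIntegral_mono_on (integrableOn_const measure_Ioc_lt_top.ne)
          (hInt0.mono_set Set.Ioc_subset_Ioi_self) measurableSet_Ioc fun x hx => ?_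
        obtain ⟨hx0, hxδ⟩ := hx
        have hrfx : 0 < rf (x + 1) b := rf_pos (by linarith) b
        rw [one_div]
        exact inv_anti₀ hrfx (rf_mono (by linarith) (by linarith) b)
      linarith
    have hDpos : 0 < ∫ α in Set.Ioi (0:ℝ), 1 / rf (α + 1) b :=
      lt_of_lt_of_le (mul_pos hδ (inv_pos.2 hrfpos)) hDen
    -- combine
    have hchain : (∫ α in Set.Ioi ε, 1 / rf (α + 1) b) /
        (∫ α in Set.Ioi (0:ℝ), 1 / rf (α + 1) b)
        ≤ (C * Q⁻¹) / (δ * (rf (1 + δ) b)⁻¹) :=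
      div_le_div₀ (mul_nonneg hC (inv_pos.2 hQpos).le) hNum
        (mul_pos hδ (inv_pos.2 hrfpos)) hDen
    have hsplit : rf (1 + δ) b = (1 + δ) * (1 + δ + 1) * P := by
      rw [rf_split hb, hPdef]
    have hPQ : (C * Q⁻¹) / (δ * (rf (1 + δ) b)⁻¹) = K * (P / Q) := by
      rw [hsplit, hKdef]
      have h1 : (1:ℝ) + δ ≠ 0 := by positivity
      have h2 : (1:ℝ) + δ + 1 ≠ 0 := by positivity
      field_simp
    have hprodrw : P / Q = ∏ s ∈ Finset.Ico 2 b, ((1 + δ + (s:ℝ)) / (ε + 1 + (s:ℝ))) := by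
      rw [hPdef, hQdef, Finset.prod_div_distrib]
    -- factorwise exponential bound
    have hfac : ∀ s ∈ Finset.Ico 2 b,
        (1 + δ + (s:ℝ)) / (ε + 1 + (s:ℝ)) ≤ Real.exp (-(c0 * ((s:ℝ) + 1)⁻¹)) :=
      fun s _ => fac_bound ε δ c0 hε hδ hεδ hc0def s
    have hprodle : (∏ s ∈ Finset.Ico 2 b, ((1 + δ + (s:ℝ)) / (ε + 1 + (s:ℝ))))
        ≤ ∏ s ∈ Finset.Ico 2 b, Real.exp (-(c0 * ((s:ℝ) + 1)⁻¹)) := by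
      refine Finset.prod_le_prod (fun s hs => ?_) hfac
      have hs0 : (0:ℝ) ≤ (s:ℝ) := Nat.cast_nonneg s
      positivity
    have hexp : (∏ s ∈ Finset.Ico 2 b, Real.exp (-(c0 * ((s:ℝ) + 1)⁻¹)))
        = Real.exp (-c0 * T b) := by
      rw [← Real.exp_sum]
      congr 1
      rw [hTdef]
      simp only []
      rw [Finset.mul_sum]
      exact Finset.sum_congr rfl fun s _ => by ring
    calc (∫ α in Set.Ioi ε, 1 / rf (α + 1) b) /
        (∫ α in Set.Ioi (0:ℝ), 1 / rf (α + 1) b)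
        ≤ (C * Q⁻¹) / (δ * (rf (1 + δ) b)⁻¹) := hchain
      _ = K * (P / Q) := hPQ
      _ = K * ∏ s ∈ Finset.Ico 2 b, ((1 + δ + (s:ℝ)) / (ε + 1 + (s:ℝ))) := by rw [hprodrw]
      _ ≤ K * Real.exp (-c0 * T b) := by
          rw [← hexp]
          exact mul_le_mul_of_nonneg_left hprodle hK
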